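/- Let E be a row-finite graph, H a hereditary saturated subset of E⁰, and ⟨H⟩ the ℤ-order ideal of the talented monoid T_E generated by H. Then ⟨H⟩^⊥ = ⟨H^⊥⟩, where H^⊥ = E⁰ \ R(H) is the set of vertices with no path into H. -/

import Mathlib

/-! Directed graphs are given by types `V` (vertices), `E` (edges) and maps
`s r : E → V` (source and range). -/

/-- `PathTo s r u v l` : the list of edges `l` is a path from `u` to `v`
(the empty list is the trivial path at `u = v`). -/
inductive PathTo {V E : Type*} (s r : E → V) : V → V → List E → Prop
  | nil (v : V) : PathTo s r v v []
  | cons (e : E) {w : V} {l : List E} :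
      PathTo s r (r e) w l → PathTo s r (s e) w (e :: l)

variable {V E : Type*}

/-- `u ≥ v` : there is a finite path from `u` to `v`. -/
def Reach (s r : E → V) (u v : V) : Prop := ∃ l : List E, PathTo s r u v l

/-- A subset of vertices is hereditary if it is closed under ranges of edges. -/
def Hereditary (s r : E → V) (H : Set V) : Prop := ∀ e : E, s e ∈ H → r e ∈ H

/-- A subset of vertices is saturated if it contains every regular vertex all of
whose out-neighbours lie in the set. -/
def Saturated (s r : E → V) (H : Set V) : Prop :=
  ∀ v : V, (∃ e, s e = v) → (∀ e, s e = v → r e ∈ H) → v ∈ H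

/-- `R(H)` : the set of vertices from which there is a finite path into `H`. -/
def ReachSet (s r : E → V) (H : Set V) : Set V := {u : V | ∃ v ∈ H, Reach s r u v}

/-- `T(w)` : the tree rooted at `w`, i.e. the set of vertices reachable from `w`. -/
def TreeOf (s r : E → V) (w : V) : Set V := {v : V | Reach s r w v}

/-- `H^⊥ = E⁰ \ R(H)`. -/
def Hperp (s r : E → V) (H : Set V) : Set V := Set.univ \ ReachSet s r H

/-- The hereditary and saturated closure of a set of vertices. -/
def HSClosure (s r : E → V) (X : Set V) : Set V :=
  ⋂₀ {S : Set V | X ⊆ S ∧ Hereditary s r S ∧ Saturated s r S}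

/-- A cycle: a nonempty closed path whose edges have pairwise distinct sources. -/
def IsCycle (s r : E → V) (l : List E) : Prop :=
  ∃ v : V, l ≠ [] ∧ PathTo s r v v l ∧ (l.map s).Nodup

/-- A path (given as a nonempty list of edges starting at `w`) flows to `H` if its
last edge has source outside `H` and range inside `H`. -/
def FlowsTo (s r : E → V) (H : Set V) (w : V) (l : List E) : Prop :=
  (∃ u : V, PathTo s r w u l) ∧ ∃ e : E, l.getLast? = some e ∧ s e ∉ H ∧ r e ∈ H

/-! ### The talented monoid of a row-finite graph -/

/-- The free commutative monoid on `V × ℤ`. -/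
abbrev FreeTal (V : Type*) := (V × ℤ) →₀ ℕ

/-- The defining relations of the talented monoid:
`v(i) = Σ_{e ∈ s⁻¹(v)} r(e)(i+1)` for every regular vertex `v` and `i ∈ ℤ`. -/
def talRel {V E : Type*} (s r : E → V) (hrow : ∀ v : V, {e : E | s e = v}.Finite) :
    FreeTal V → FreeTal V → Prop := fun x y =>
  ∃ (v : V) (i : ℤ), (∃ e, s e = v) ∧ x = Finsupp.single (v, i) 1 ∧
    y = ∑ e ∈ (hrow v).toFinset, Finsupp.single (r e, i + 1) 1

/-- The congruence generated by the defining relations. -/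
noncomputable def talCon {V E : Type*} (s r : E → V) (hrow : ∀ v : V, {e : E | s e = v}.Finite) :
    AddCon (FreeTal V) := addConGen (talRel s r hrow)

/-- The talented monoid `T_E` of a row-finite graph. -/
abbrev TalMon {V E : Type*} (s r : E → V) (hrow : ∀ v : V, {e : E | s e = v}.Finite) :=
  (talCon s r hrow).Quotient

/-- The generator `v(i)` of the talented monoid, for `p = (v, i)`. -/
noncomputable def talGen {V E : Type*} (s r : E → V) (hrow : ∀ v : V, {e : E | s e = v}.Finite)
    (p : V × ℤ) : TalMon s r hrow :=
  (talCon s r hrow).mk' (Finsupp.single p 1)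

section OrderNotions

variable {M : Type*} [AddCommMonoid M]

/-- The algebraic preorder: `a ≤ b` iff `b = a + c` for some `c`. -/
def AlgLE (a b : M) : Prop := ∃ c, b = a + c

/-- Strict algebraic order: `a < b` iff `b = a + c` for some nonzero `c`. -/
def AlgLT (a b : M) : Prop := ∃ c, c ≠ 0 ∧ b = a + c

/-- Comparability with respect to the algebraic order. -/
def CmpRel (a b : M) : Prop := a = b ∨ AlgLT a b ∨ AlgLT b a

/-- The orthogonal set `I^⊥ = {a | a ∥ I} ∪ {0}`. -/
def perpSet (I : Set M) : Set M :=
  {a : M | a = 0 ∨ ∀ x ∈ I, x ≠ 0 → ¬ CmpRel a x}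

end OrderNotions

/-- The ℤ-order ideal `⟨H⟩` of the talented monoid generated by a set of vertices `H`:
all elements below a finite sum of shifted generators `v(i)`, `v ∈ H`. -/
def genIdeal {V E : Type*} (s r : E → V) (hrow : ∀ v : V, {e : E | s e = v}.Finite)
    (H : Set V) : Set (TalMon s r hrow) :=
  {x | ∃ l : List (V × ℤ), (∀ p ∈ l, p.1 ∈ H) ∧
    AlgLE x (l.map (talGen s r hrow)).sum}

/-!
For hereditary saturated `K`, the defining relations `v(i) = Σ r(e)(i+1)` never move a
generator from inside `K` to outside it or back, so "every vertex in the support lies in `K`"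
is an invariant of the congruence, and `⟨K⟩` consists exactly of the classes of the words
supported in `K`. Both `H` and `H^⊥` are hereditary and saturated and they are disjoint, so
`⟨H⟩ ∩ ⟨H^⊥⟩ = 0`, which gives `⟨H^⊥⟩ ⊆ ⟨H⟩^⊥`. Conversely, if a nonzero class involves a
generator `v(i)` with `v ∈ R(H)`, then along a path from `v` to `w ∈ H` of length `n` we get
`w(i + n) ≤ v(i)`, a nonzero element of `⟨H⟩` comparable with it.
-/

section AlgOrder

variable {M : Type*} [AddCommMonoid M] {a b c : M}

theorem algLE_refl (a : M) : AlgLE a a := ⟨0, (add_zero a).symm⟩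

theorem AlgLE.trans (hab : AlgLE a b) (hbc : AlgLE b c) : AlgLE a c := by
  obtain ⟨d, rfl⟩ := hab
  obtain ⟨e, rfl⟩ := hbc
  exact ⟨d + e, add_assoc a d e⟩

theorem AlgLE.map {N : Type*} [AddCommMonoid N] (f : M →+ N) (h : AlgLE a b) :
    AlgLE (f a) (f b) := by
  obtain ⟨c, rfl⟩ := h
  exact ⟨f c, map_add f a c⟩

theorem algLE_of_le {N : Type*} [AddCommMonoid N] [PartialOrder N] [CanonicallyOrderedAdd N]
    {x y : N} (h : x ≤ y) : AlgLE x y :=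
  le_iff_exists_add.1 h

theorem algLE_add_right (a b : M) : AlgLE a (a + b) := ⟨b, rfl⟩

theorem CmpRel.of_algLE (h : AlgLE a b) : CmpRel b a := by
  obtain ⟨c, rfl⟩ := h
  rcases eq_or_ne c 0 with rfl | hc
  · exact Or.inl (add_zero a)
  · exact Or.inr (Or.inr ⟨c, hc, rfl⟩)

theorem CmpRel.algLE_or_algLE (h : CmpRel a b) : AlgLE a b ∨ AlgLE b a := by
  rcases h with rfl | ⟨c, -, rfl⟩ | ⟨c, -, rfl⟩
  · exact Or.inl (algLE_refl a)
  · exact Or.inl (algLE_add_right a c)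
  · exact Or.inr (algLE_add_right b c)

theorem eq_zero_of_mem_perpSet_of_algLE {I : Set M} {x z : M} (hx : x ∈ perpSet I)
    (hz : z ∈ I) (hz0 : z ≠ 0) (hzx : AlgLE z x) : x = 0 :=
  hx.resolve_right fun h => h z hz hz0 (CmpRel.of_algLE hzx)

theorem subset_perpSet {I J : Set M} (hI : ∀ {x y}, AlgLE x y → y ∈ I → x ∈ I)
    (hJ : ∀ {x y}, AlgLE x y → y ∈ J → x ∈ J) (hIJ : ∀ x ∈ I, x ∈ J → x = 0) :
    J ⊆ perpSet I := by
  intro x hx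
  by_cases hx0 : x = 0
  · exact Or.inl hx0
  refine Or.inr fun y hy hy0 hxy => ?_
  rcases hxy.algLE_or_algLE with hle | hle
  · exact hx0 (hIJ x (hI hle hy) hx)
  · exact hy0 (hIJ y hy (hJ hle hx))

end AlgOrder

/-- `f` kills both or neither; a congruence because `0` is the only additive unit of `N`. -/
def AddCon.ofVanishing {M N : Type*} [AddCommMonoid M] [AddCommMonoid N]
    [Subsingleton (AddUnits N)] (f : M →+ N) : AddCon M where
  r x y := f x = 0 ↔ f y = 0
  iseqv := ⟨fun _ => Iff.rfl, Iff.symm, Iff.trans⟩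
  add' {x y x' y'} h h' := by
    simp only [map_add, add_eq_zero]
    exact and_congr h h'

theorem AddCon.mk'_eq_mk'_iff {M : Type*} [AddZeroClass M] {c : AddCon M} {a b : M} :
    c.mk' a = c.mk' b ↔ c a b :=
  c.eq

theorem Finsupp.toMultiset_map_single_sum {α : Type*} (a : α →₀ ℕ) :
    (a.toMultiset.map fun p => Finsupp.single p 1).sum = a := by
  induction a using Finsupp.induction_linear with
  | zero => simp
  | add a b ha hb => rw [Finsupp.toMultiset_add, Multiset.map_add, Multiset.sum_add, ha, hb]
  | single p n => simp [Multiset.map_nsmul, Multiset.sum_nsmul]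

section Graph

variable {s r : E → V}

theorem hereditary_empty : Hereditary s r (∅ : Set V) :=
  fun _ he => he.elim

theorem saturated_empty : Saturated s r (∅ : Set V) :=
  fun _ ⟨e, he⟩ hall => hall e he

theorem hereditary_hperp (H : Set V) : Hereditary s r (Hperp s r H) := by
  rintro e ⟨-, he⟩
  refine ⟨trivial, fun ⟨w, hw, l, hl⟩ => he ⟨w, hw, e :: l, PathTo.cons e hl⟩⟩

theorem saturated_hperp {H : Set V} (hher : Hereditary s r H) :
    Saturated s r (Hperp s r H) := by
  rintro v ⟨e, he⟩ hall
  refine ⟨trivial, ?_⟩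
  rintro ⟨w, hw, l, hl⟩
  cases hl with
  | nil => exact (hall e he).2 ⟨r e, hher e (he ▸ hw), [], PathTo.nil _⟩
  | cons e' hl' => exact (hall e' rfl).2 ⟨w, hw, _, hl'⟩

theorem notMem_hperp_of_mem {H : Set V} {v : V} (hv : v ∈ H) : v ∉ Hperp s r H :=
  fun h => h.2 ⟨v, hv, [], PathTo.nil v⟩

end Graph

section Talented

variable {s r : E → V} {hrow : ∀ v : V, {e : E | s e = v}.Finite}

noncomputable def outsidePart (K : Set V) : FreeTal V →+ FreeTal V := by
  classical exact Finsupp.filterAddHom fun p => p.1 ∉ K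

theorem outsidePart_eq_zero_iff {K : Set V} {a : FreeTal V} :
    outsidePart K a = 0 ↔ ∀ p ∈ a.support, p.1 ∈ K := by
  classical
  simp only [outsidePart, Finsupp.filterAddHom, AddMonoidHom.coe_mk, ZeroHom.coe_mk,
    Finsupp.filter_eq_zero_iff, Finsupp.mem_support_iff]
  exact forall_congr' fun p => not_imp_comm

theorem outsidePart_single_eq_zero_iff {K : Set V} {p : V × ℤ} :
    outsidePart K (Finsupp.single p 1) = 0 ↔ p.1 ∈ K := by
  simp [outsidePart_eq_zero_iff]

theorem outsidePart_empty (a : FreeTal V) : outsidePart ∅ a = a := by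
  classical
  simp [outsidePart, Finsupp.filterAddHom, Finsupp.filter_eq_self_iff]

theorem outsidePart_eq_zero_iff_of_talCon {K : Set V} (hher : Hereditary s r K)
    (hsat : Saturated s r K) {a b : FreeTal V} (h : talCon s r hrow a b) :
    outsidePart K a = 0 ↔ outsidePart K b = 0 := by
  suffices talCon s r hrow ≤ AddCon.ofVanishing (outsidePart K) from this h
  refine AddCon.addConGen_le.2 fun x y ⟨v, i, hreg, hx, hy⟩ => ?_
  change outsidePart K x = 0 ↔ outsidePart K y = 0
  simp only [hx, hy, map_sum, outsidePart_single_eq_zero_iff, Finset.sum_eq_zero_iff,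
    Set.Finite.mem_toFinset, Set.mem_ofPred_eq]
  exact ⟨fun hv e he => hher e (he ▸ hv), hsat v hreg⟩

theorem mk'_eq_zero_iff {a : FreeTal V} : (talCon s r hrow).mk' a = 0 ↔ a = 0 := by
  refine ⟨fun h => ?_, fun h => h ▸ map_zero _⟩
  rw [← map_zero (talCon s r hrow).mk', AddCon.mk'_eq_mk'_iff] at h
  simpa [outsidePart_empty] using
    (outsidePart_eq_zero_iff_of_talCon hereditary_empty saturated_empty h).2 (map_zero _)

theorem talGen_ne_zero (p : V × ℤ) : talGen s r hrow p ≠ 0 := by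
  rw [talGen, Ne, mk'_eq_zero_iff]
  exact Finsupp.single_ne_zero.2 one_ne_zero

theorem mk'_list_sum (l : List (V × ℤ)) :
    (talCon s r hrow).mk' (l.map fun p => Finsupp.single p 1).sum
      = (l.map (talGen s r hrow)).sum := by
  rw [map_list_sum, List.map_map]
  rfl

theorem talGen_algLE_mk' {a : FreeTal V} {p : V × ℤ} (hp : p ∈ a.support) :
    AlgLE (talGen s r hrow p) ((talCon s r hrow).mk' a) :=
  (algLE_of_le (Finsupp.single_le_iff.2 (Nat.one_le_iff_ne_zero.2
    (Finsupp.mem_support_iff.1 hp)))).map _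

theorem talGen_eq_sum (v : V) (i : ℤ) (hreg : ∃ e, s e = v) :
    talGen s r hrow (v, i) = ∑ e ∈ (hrow v).toFinset, talGen s r hrow (r e, i + 1) := by
  rw [talGen, AddCon.mk'_eq_mk'_iff.2 (AddConGen.Rel.of _ _ ⟨v, i, hreg, rfl, rfl⟩), map_sum]
  rfl

theorem talGen_range_algLE_talGen_source (e : E) (i : ℤ) :
    AlgLE (talGen s r hrow (r e, i + 1)) (talGen s r hrow (s e, i)) := by
  classical
  have he : e ∈ (hrow (s e)).toFinset := by rw [Set.Finite.mem_toFinset]; rfl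
  rw [talGen_eq_sum (s e) i ⟨e, rfl⟩, ← Finset.add_sum_erase _ _ he]
  exact algLE_add_right _ _

theorem talGen_algLE_of_pathTo {v w : V} {l : List E} (hl : PathTo s r v w l) (i : ℤ) :
    AlgLE (talGen s r hrow (w, i + l.length)) (talGen s r hrow (v, i)) := by
  induction hl generalizing i with
  | nil => simpa using algLE_refl _
  | cons e _ ih =>
    rw [List.length_cons, Nat.cast_succ, add_comm (_ : ℤ) 1, ← add_assoc]
    exact (ih (i + 1)).trans (talGen_range_algLE_talGen_source e i)

theorem mem_genIdeal_of_algLE {K : Set V} {x y : TalMon s r hrow} (hxy : AlgLE x y)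
    (hy : y ∈ genIdeal s r hrow K) : x ∈ genIdeal s r hrow K := by
  obtain ⟨l, hl, hle⟩ := hy
  exact ⟨l, hl, hxy.trans hle⟩

theorem talGen_mem_genIdeal {K : Set V} {v : V} (hv : v ∈ K) (i : ℤ) :
    talGen s r hrow (v, i) ∈ genIdeal s r hrow K :=
  ⟨[(v, i)], by simpa using hv, by simpa using algLE_refl _⟩

theorem mk'_mem_genIdeal_iff {K : Set V} (hher : Hereditary s r K) (hsat : Saturated s r K)
    {a : FreeTal V} :
    (talCon s r hrow).mk' a ∈ genIdeal s r hrow K ↔ outsidePart K a = 0 := by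
  constructor
  · rintro ⟨l, hl, c, hc⟩
    obtain ⟨c, rfl⟩ := AddCon.mk'_surjective c
    rw [← mk'_list_sum, ← map_add, AddCon.mk'_eq_mk'_iff] at hc
    have hsum : outsidePart K (l.map fun p => Finsupp.single p 1).sum = 0 := by
      simp only [map_list_sum, List.map_map, List.sum_eq_zero_iff, List.mem_map,
        Function.comp_apply]
      rintro _ ⟨p, hp, rfl⟩
      exact outsidePart_single_eq_zero_iff.2 (hl p hp)
    rw [outsidePart_eq_zero_iff_of_talCon hher hsat hc, map_add, add_eq_zero] at hsum
    exact hsum.1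
  · intro ha
    refine ⟨a.toMultiset.toList, fun p hp => ?_, ?_⟩
    · rw [Multiset.mem_toList, Finsupp.mem_toMultiset] at hp
      exact outsidePart_eq_zero_iff.1 ha p hp
    · rw [← mk'_list_sum, ← Multiset.sum_coe, ← Multiset.map_coe, Multiset.coe_toList,
        Finsupp.toMultiset_map_single_sum]
      exact algLE_refl _

theorem eq_zero_of_mem_genIdeal_of_mem_genIdeal_hperp {H : Set V} (hher : Hereditary s r H)
    (hsat : Saturated s r H) {x : TalMon s r hrow} (hx : x ∈ genIdeal s r hrow H)
    (hx' : x ∈ genIdeal s r hrow (Hperp s r H)) : x = 0 := by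
  obtain ⟨a, rfl⟩ := AddCon.mk'_surjective x
  rw [mk'_mem_genIdeal_iff hher hsat, outsidePart_eq_zero_iff] at hx
  rw [mk'_mem_genIdeal_iff (hereditary_hperp H) (saturated_hperp hher),
    outsidePart_eq_zero_iff] at hx'
  rw [mk'_eq_zero_iff, ← Finsupp.support_eq_empty, Finset.eq_empty_iff_forall_notMem]
  exact fun p hp => notMem_hperp_of_mem (hx p hp) (hx' p hp)

end Talented

theorem stmt_14 {V E : Type*} (s r : E → V)
    (hrow : ∀ v : V, {e : E | s e = v}.Finite)
    (H : Set V) (hher : Hereditary s r H) (hsat : Saturated s r H) :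
    perpSet (genIdeal s r hrow H) = genIdeal s r hrow (Hperp s r H) := by
  refine Set.Subset.antisymm ?_ (subset_perpSet mem_genIdeal_of_algLE mem_genIdeal_of_algLE
    fun x hx hx' => eq_zero_of_mem_genIdeal_of_mem_genIdeal_hperp hher hsat hx hx')
  intro x hx
  obtain ⟨a, rfl⟩ := AddCon.mk'_surjective x
  rw [mk'_mem_genIdeal_iff (hereditary_hperp H) (saturated_hperp hher), outsidePart_eq_zero_iff]
  intro p hp
  refine ⟨trivial, fun ⟨w, hw, l, hl⟩ => ?_⟩
  have hle : AlgLE (talGen s r hrow (w, p.2 + l.length)) ((talCon s r hrow).mk' a) :=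
    (talGen_algLE_of_pathTo hl p.2).trans (talGen_algLE_mk' hp)
  have hx0 := eq_zero_of_mem_perpSet_of_algLE hx (talGen_mem_genIdeal hw _) (talGen_ne_zero _) hle
  simp [mk'_eq_zero_iff.1 hx0] at hp
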